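/- arXiv:2002.05488 — 9 statements merged into one kernel-verified Lean document; each statement's English description precedes it below -/
import Mathlib

section
/- Let P = {1, 2, ..., n} ⊂ ℝ and for each i with 1 ≤ i ≤ n-1 let B_i be the bicoloring in which points 1,...,i are red and points i+1,...,n are blue. Then any family of real intervals containing, for every i, an interval balanced with respect to B_i, must have cardinality at least n-1. -/
/-!
An interval is balanced for at most one of the bicolorings `B_i`. If it were balanced for `B_i`
and `B_j` with `i < j`, its red points would in both cases be half of its points, so it would
contain no point of `(i, j]`. But it contains a red point `q ≤ i` and a blue point `p > i`, hence
every integer between them, among them `min j p`. So the `n - 1` bicolorings need pairwise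
different intervals.
-/

open Finset

section Balanced

variable {α : Type*} [LinearOrder α]

/-- `S` is the set of points in an interval; the bicoloring makes the points `≤ i` red and the
points `> i` blue. -/
def BalancedAt (S : Finset α) (i : α) : Prop :=
  #{p ∈ S | p ≤ i} = #{p ∈ S | i < p} ∧ 0 < #{p ∈ S | p ≤ i}

lemma card_filter_le_add_card_filter_lt (S : Finset α) (i : α) :
    #{p ∈ S | p ≤ i} + #{p ∈ S | i < p} = #S := by
  simpa only [not_le] using card_filter_add_card_filter_not (s := S) (· ≤ i)

lemma BalancedAt.not_of_lt {S : Finset α} (hS : (S : Set α).OrdConnected) {i j : α}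
    (hi : BalancedAt S i) (hij : i < j) : ¬BalancedAt S j := by
  rintro ⟨hj, -⟩
  have hcard : #{p ∈ S | p ≤ i} = #{p ∈ S | p ≤ j} := by
    have := card_filter_le_add_card_filter_lt S i
    have := card_filter_le_add_card_filter_lt S j
    have := hi.1
    omega
  have hred : {p ∈ S | p ≤ i} = {p ∈ S | p ≤ j} :=
    eq_of_subset_of_card_le (monotone_filter_right S fun _ _ hp => hp.trans hij.le) hcard.ge
  obtain ⟨q, hq⟩ := card_pos.mp hi.2
  obtain ⟨p, hp⟩ := card_pos.mp (hi.1 ▸ hi.2)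
  rw [mem_filter] at hq hp
  have hmin : min j p ∈ S :=
    hS.out hq.1 hp.1 ⟨hq.2.trans (le_min hij.le hp.2.le), min_le_right j p⟩
  have hmin_red : min j p ∈ ({p ∈ S | p ≤ i} : Finset α) :=
    hred ▸ mem_filter.mpr ⟨hmin, min_le_left j p⟩
  exact (lt_min hij hp.2).not_ge (mem_filter.mp hmin_red).2

lemma BalancedAt.eq {S : Finset α} (hS : (S : Set α).OrdConnected) {i j : α}
    (hi : BalancedAt S i) (hj : BalancedAt S j) : i = j := by
  rcases lt_trichotomy i j with hij | hij | hij
  · exact absurd hj (hi.not_of_lt hS hij)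
  · exact hij
  · exact absurd hi (hj.not_of_lt hS hij)

end Balanced

noncomputable def pointsIn (n : ℕ) (I : ℝ × ℝ) : Finset ℕ :=
  {p ∈ Icc 1 n | (p : ℝ) ∈ Set.Icc I.1 I.2}

lemma ordConnected_pointsIn (n : ℕ) (I : ℝ × ℝ) : (pointsIn n I : Set ℕ).OrdConnected := by
  have : (pointsIn n I : Set ℕ) = Set.Icc 1 n ∩ Nat.cast ⁻¹' Set.Icc I.1 I.2 := by
    ext p
    simp [pointsIn]
  rw [this]
  exact Set.ordConnected_Icc.inter (Set.ordConnected_Icc.preimage_mono Nat.mono_cast)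

lemma balancedAt_pointsIn_iff (n i : ℕ) (I : ℝ × ℝ) :
    BalancedAt (pointsIn n I) i ↔
      ((Icc 1 n).filter fun (p : ℕ) => I.1 ≤ (p : ℝ) ∧ (p : ℝ) ≤ I.2 ∧ p ≤ i).card =
        ((Icc 1 n).filter fun (p : ℕ) => I.1 ≤ (p : ℝ) ∧ (p : ℝ) ≤ I.2 ∧ i < p).card ∧
      0 < ((Icc 1 n).filter fun (p : ℕ) => I.1 ≤ (p : ℝ) ∧ (p : ℝ) ≤ I.2 ∧ p ≤ i).card := by
  simp only [BalancedAt, pointsIn, filter_filter, Set.mem_Icc, and_assoc]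

theorem stmt_1_general (n : ℕ) (F : Finset (ℝ × ℝ))
    (h : ∀ i : ℕ, 1 ≤ i → i ≤ n - 1 → ∃ I ∈ F,
      ((Finset.Icc 1 n).filter
        (fun (p : ℕ) => I.1 ≤ (p : ℝ) ∧ (p : ℝ) ≤ I.2 ∧ p ≤ i)).card =
      ((Finset.Icc 1 n).filter
        (fun (p : ℕ) => I.1 ≤ (p : ℝ) ∧ (p : ℝ) ≤ I.2 ∧ i < p)).card ∧
      0 < ((Finset.Icc 1 n).filter
        (fun (p : ℕ) => I.1 ≤ (p : ℝ) ∧ (p : ℝ) ≤ I.2 ∧ p ≤ i)).card) :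
    n - 1 ≤ F.card := by
  have hcover : ∀ i ∈ Icc 1 (n - 1), ∃ I ∈ F, BalancedAt (pointsIn n I) i := by
    intro i hi
    obtain ⟨hi1, hin⟩ := mem_Icc.mp hi
    simpa only [balancedAt_pointsIn_iff] using h i hi1 hin
  have hunique :
      ∀ I ∈ F, {i ∈ (Icc 1 (n - 1) : Set ℕ) | BalancedAt (pointsIn n I) i}.Subsingleton :=
    fun I _ i hi j hj => hi.2.eq (ordConnected_pointsIn n I) hj.2
  simpa using card_le_card_of_forall_subsingleton _ hcover hunique

/-- For `P = {1,…,n} ⊆ ℝ` and the step bicolorings `B_i` (points `1,…,i` red,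
the rest blue, `1 ≤ i ≤ n-1`), any family of intervals containing a balanced
interval for each `B_i` has size at least `n - 1`.  An interval `[a,b]`
(encoded as the pair `(a,b)`) is balanced for `B_i` if it contains equally
many (and at least one of each) red and blue points of `P`. -/
theorem stmt_1 (n : ℕ) (hn : 2 ≤ n) (F : Finset (ℝ × ℝ))
    (h : ∀ i : ℕ, 1 ≤ i → i ≤ n - 1 → ∃ I ∈ F,
      ((Finset.Icc 1 n).filter
        (fun (p : ℕ) => I.1 ≤ (p : ℝ) ∧ (p : ℝ) ≤ I.2 ∧ p ≤ i)).card =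
      ((Finset.Icc 1 n).filter
        (fun (p : ℕ) => I.1 ≤ (p : ℝ) ∧ (p : ℝ) ≤ I.2 ∧ i < p)).card ∧
      0 < ((Finset.Icc 1 n).filter
        (fun (p : ℕ) => I.1 ≤ (p : ℝ) ∧ (p : ℝ) ≤ I.2 ∧ p ≤ i)).card) :
    n - 1 ≤ F.card :=
  stmt_1_general n F h
end

section
/- Let n ≥ 2k and let B be a bicoloring of n points on a line with more than ⌊n/(2k) + 1⌋·(k-1) red points and more than ⌊n/(2k) + 1⌋·(k-1) blue points. Then there exists an index j with 1 ≤ j ≤ n-2k+1 such that the window of 2k consecutive points {p_j, ..., p_{j+2k-1}} contains exactly k red and k blue points. -/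
open Finset

private lemma ivt_up (g : ℕ → ℕ) (h : ∀ i, g (i + 1) ≤ g i + 1) (k : ℕ) :
    ∀ a b, a ≤ b → g a ≤ k → k ≤ g b → ∃ c, a ≤ c ∧ c ≤ b ∧ g c = k := by
  intro a b hab
  induction b, hab using Nat.le_induction with
  | base => intro h1 h2; exact ⟨a, le_refl a, le_refl a, le_antisymm h1 h2⟩
  | succ b hab ih =>
    intro h1 h2
    by_cases hb : k ≤ g b
    · obtain ⟨c, hc1, hc2, hc3⟩ := ih h1 hb
      exact ⟨c, hc1, Nat.le_succ_of_le hc2, hc3⟩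
    · refine ⟨b + 1, Nat.le_succ_of_le hab, le_refl _, ?_⟩
      have := h b; omega

private lemma ivt_down (g : ℕ → ℕ) (h : ∀ i, g i ≤ g (i + 1) + 1) (k : ℕ) :
    ∀ a b, a ≤ b → k ≤ g a → g b ≤ k → ∃ c, a ≤ c ∧ c ≤ b ∧ g c = k := by
  intro a b hab
  induction b, hab using Nat.le_induction with
  | base => intro h1 h2; exact ⟨a, le_refl a, le_refl a, le_antisymm h2 h1⟩
  | succ b hab ih =>
    intro h1 h2
    by_cases hb : g b ≤ k
    · obtain ⟨c, hc1, hc2, hc3⟩ := ih h1 hb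
      exact ⟨c, hc1, Nat.le_succ_of_le hc2, hc3⟩
    · refine ⟨b + 1, Nat.le_succ_of_le hab, le_refl _, ?_⟩
      have := h b; omega

private lemma filter_insert_bound (A C : Finset ℕ) (a : ℕ) (p : ℕ → Prop)
    [DecidablePred p] (h : A ⊆ insert a C) :
    (A.filter p).card ≤ (C.filter p).card + 1 := by
  calc (A.filter p).card ≤ ((insert a C).filter p).card :=
        card_le_card (filter_subset_filter p h)
    _ ≤ (C.filter p).card + 1 := by
        rw [filter_insert]
        split
        · exact card_insert_le _ _
        · exact Nat.le_succ _

private lemma window_sum (B : ℕ → Bool) (j t : ℕ) :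
    ((Ico j (j + t)).filter (fun l => B l = true)).card +
      ((Ico j (j + t)).filter (fun l => B l = false)).card = t := by
  have h := Finset.card_filter_add_card_filter_not
    (s := Ico j (j + t)) (p := fun l => B l = true)
  have he : (Ico j (j + t)).filter (fun l => ¬ B l = true)
      = (Ico j (j + t)).filter (fun l => B l = false) := by
    apply filter_congr; intro x _; simp
  rw [he] at h
  simpa using h

/-- Covering bound: if every window of length `2k` starting in `[1, n-2k+1]`
contains at most `k-1` points satisfying `p`, then at most `(n/(2k)+1)*(k-1)`
points of `[1,n]` satisfy `p`. -/
private lemma cover_bound (n k : ℕ) (hk : 1 ≤ k) (hn : 2 * k ≤ n)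
    (p : ℕ → Prop) [DecidablePred p]
    (hall : ∀ j, 1 ≤ j → j ≤ n - 2 * k + 1 →
      ((Ico j (j + 2 * k)).filter p).card ≤ k - 1) :
    ((Icc 1 n).filter p).card ≤ (n / (2 * k) + 1) * (k - 1) := by
  set q := n / (2 * k) with hq
  set w : ℕ → ℕ := fun i => min (1 + 2 * k * i) (n - 2 * k + 1) with hw
  have hsub : (Icc 1 n).filter p ⊆
      (range (q + 1)).biUnion (fun i => (Ico (w i) (w i + 2 * k)).filter p) := by
    intro l hl
    simp only [mem_filter, mem_Icc] at hl
    obtain ⟨⟨hl1, hl2⟩, hpl⟩ := hl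
    set i := (l - 1) / (2 * k) with hi
    have hk2 : 0 < 2 * k := by omega
    have h1 : 2 * k * i ≤ l - 1 := by
      rw [hi, mul_comm]; exact Nat.div_mul_le_self _ _
    have h2 : l - 1 < 2 * k * i + 2 * k := by
      rw [hi]
      have h := Nat.div_add_mod (l - 1) (2 * k)
      have h' := Nat.mod_lt (l - 1) hk2
      omega
    have hile : i ≤ q := by
      rw [hi, hq]; exact Nat.div_le_div_right (by omega)
    simp only [mem_biUnion, mem_range, mem_filter, mem_Ico]
    refine ⟨i, by omega, ⟨?_, ?_⟩, hpl⟩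
    · rw [hw]; simp only; omega
    · rw [hw]; simp only; omega
  calc ((Icc 1 n).filter p).card
      ≤ ∑ i ∈ range (q + 1), ((Ico (w i) (w i + 2 * k)).filter p).card :=
        (card_le_card hsub).trans (card_biUnion_le)
    _ ≤ ∑ _i ∈ range (q + 1), (k - 1) := by
        apply Finset.sum_le_sum
        intro i _
        apply hall
        · rw [hw]; simp only; omega
        · rw [hw]; simp only; omega
    _ = (q + 1) * (k - 1) := by rw [Finset.sum_const, card_range, smul_eq_mul]

/-- Let `n ≥ 2k` and let `B` be a bicoloring of points `1,…,n` (true = red,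
false = blue) with more than `⌊n/(2k) + 1⌋ * (k-1)` red points and more than
`⌊n/(2k) + 1⌋ * (k-1)` blue points.  Then some window of `2k` consecutive
points `{j,…,j+2k-1}` with `1 ≤ j ≤ n-2k+1` contains exactly `k` red and `k`
blue points. -/
theorem stmt_5 (n k : ℕ) (hk : 1 ≤ k) (hn : 2 * k ≤ n) (B : ℕ → Bool)
    (hred : (n / (2 * k) + 1) * (k - 1) <
      ((Finset.Icc 1 n).filter (fun l => B l = true)).card)
    (hblue : (n / (2 * k) + 1) * (k - 1) <
      ((Finset.Icc 1 n).filter (fun l => B l = false)).card) :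
    ∃ j : ℕ, 1 ≤ j ∧ j ≤ n - 2 * k + 1 ∧
      ((Finset.Ico j (j + 2 * k)).filter (fun l => B l = true)).card = k ∧
      ((Finset.Ico j (j + 2 * k)).filter (fun l => B l = false)).card = k := by
  set f : ℕ → ℕ := fun j => ((Ico j (j + 2 * k)).filter (fun l => B l = true)).card
    with hf
  -- step bounds
  have hup : ∀ j, f (j + 1) ≤ f j + 1 := by
    intro j
    apply filter_insert_bound _ _ (j + 2 * k)
    intro x hx
    simp only [mem_Ico] at hx
    simp only [mem_insert, mem_Ico]
    omega
  have hdown : ∀ j, f j ≤ f (j + 1) + 1 := by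
    intro j
    apply filter_insert_bound _ _ j
    intro x hx
    simp only [mem_Ico] at hx
    simp only [mem_insert, mem_Ico]
    omega
  -- there is a window with f ≥ k
  have hexge : ∃ b, 1 ≤ b ∧ b ≤ n - 2 * k + 1 ∧ k ≤ f b := by
    by_contra hcon
    push_neg at hcon
    have := cover_bound n k hk hn (fun l => B l = true)
      (fun j h1 h2 => by
        have h3 := hcon j h1 h2
        simp only [hf] at h3
        omega)
    omega
  -- there is a window with f ≤ k
  have hexle : ∃ a, 1 ≤ a ∧ a ≤ n - 2 * k + 1 ∧ f a ≤ k := by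
    by_contra hcon
    push_neg at hcon
    have := cover_bound n k hk hn (fun l => B l = false)
      (fun j h1 h2 => by
        have h3 := hcon j h1 h2
        have h4 := window_sum B j (2 * k)
        simp only [hf] at h3
        omega)
    omega
  obtain ⟨b, hb1, hb2, hbk⟩ := hexge
  obtain ⟨a, ha1, ha2, hak⟩ := hexle
  have key : ∃ c, 1 ≤ c ∧ c ≤ n - 2 * k + 1 ∧ f c = k := by
    rcases le_total a b with hab | hba
    · obtain ⟨c, hc1, hc2, hc3⟩ := ivt_up f hup k a b hab hak hbk
      exact ⟨c, le_trans ha1 hc1, le_trans hc2 hb2, hc3⟩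
    · obtain ⟨c, hc1, hc2, hc3⟩ := ivt_down f hdown k b a hba hbk hak
      exact ⟨c, le_trans hb1 hc1, le_trans hc2 ha2, hc3⟩
  obtain ⟨c, hc1, hc2, hc3⟩ := key
  refine ⟨c, hc1, hc2, hc3, ?_⟩
  have h4 := window_sum B c (2 * k)
  simp only [hf] at hc3
  omega
end

section
/- For every k ≥ 1 there exist n = 3k - 1 points on a line and a bicoloring with exactly ⌊n/(2k)+1⌋·(k-1) = 2(k-1) blue points and k+1 red points such that no window of 2k consecutive points is balanced (i.e., contains k red and k blue points). Specifically, color the first k-1 and last k-1 points blue and the middle k+1 points red. -/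
/-- For every `k ≥ 1` there are `n = 3k - 1` points on a line and a bicoloring
with exactly `⌊n/(2k)+1⌋·(k-1) = 2(k-1)` blue points and `k+1` red points such
that no window of `2k` consecutive points is balanced: color points
`1,…,k-1` and `2k+1,…,3k-1` blue and points `k,…,2k` red. -/
theorem stmt_6 (k : ℕ) (hk : 1 ≤ k) :
    ∃ n : ℕ, n = 3 * k - 1 ∧
    ∃ B : ℕ → Bool, (∀ p, 1 ≤ p → p ≤ n →
        (B p = true ↔ (k ≤ p ∧ p ≤ 2 * k))) ∧
      (n / (2 * k) + 1) * (k - 1) = 2 * (k - 1) ∧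
      ((Finset.Icc 1 n).filter (fun p => B p = false)).card = 2 * (k - 1) ∧
      ((Finset.Icc 1 n).filter (fun p => B p = true)).card = k + 1 ∧
      ∀ j : ℕ, 1 ≤ j → j ≤ n - 2 * k + 1 →
        ((Finset.Ico j (j + 2 * k)).filter (fun p => B p = true)).card ≠ k := by
  refine ⟨3 * k - 1, rfl, fun p => decide (k ≤ p ∧ p ≤ 2 * k), ?_, ?_, ?_, ?_, ?_⟩
  · intro p _ _; simp
  · have hdiv : (3 * k - 1) / (2 * k) = 1 := by
      exact Nat.div_eq_of_lt_le (by omega) (by omega)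
    rw [hdiv]
  · have htrue : ((Finset.Icc 1 (3 * k - 1)).filter
        (fun p => decide (k ≤ p ∧ p ≤ 2 * k) = true)) = Finset.Icc k (2 * k) := by
      ext p
      simp only [Finset.mem_filter, Finset.mem_Icc, decide_eq_true_eq]
      omega
    have hsum := Finset.card_filter_add_card_filter_not
      (s := Finset.Icc 1 (3 * k - 1)) (p := fun p => decide (k ≤ p ∧ p ≤ 2 * k) = true)
    have heq : ((Finset.Icc 1 (3 * k - 1)).filter
        (fun p => decide (k ≤ p ∧ p ≤ 2 * k) = false)) =
        ((Finset.Icc 1 (3 * k - 1)).filter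
        (fun p => ¬ (decide (k ≤ p ∧ p ≤ 2 * k) = true))) := by
      ext p; simp
    rw [heq]
    rw [htrue] at hsum
    rw [Nat.card_Icc, Nat.card_Icc] at hsum
    omega
  · have htrue : ((Finset.Icc 1 (3 * k - 1)).filter
        (fun p => decide (k ≤ p ∧ p ≤ 2 * k) = true)) = Finset.Icc k (2 * k) := by
      ext p
      simp only [Finset.mem_filter, Finset.mem_Icc, decide_eq_true_eq]
      omega
    rw [htrue, Nat.card_Icc]
    omega
  · intro j hj1 hj2
    have hwin : ((Finset.Ico j (j + 2 * k)).filter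
        (fun p => decide (k ≤ p ∧ p ≤ 2 * k) = true)) = Finset.Icc k (2 * k) := by
      ext p
      simp only [Finset.mem_filter, Finset.mem_Ico, Finset.mem_Icc, decide_eq_true_eq]
      omega
    rw [hwin, Nat.card_Icc]
    omega
end

section
/- Let m < n/2. For points p_1 < ... < p_n on a line, there exists a family of n - m intervals such that for every m-restricted bicoloring of P (one with at least m red and at least m blue points), some interval of the family is balanced. Specifically, the family of consecutive-pair intervals on the first n - m + 1 points works. -/
/-! Let `p j` be the first point whose colour differs from that of `p 0`. Every point of that
colour lies at or after `p j`, so there are at least `m` points from `j` on and `j ≤ n - m`;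
the interval `[p (j - 1), p j]` then contains exactly one point of each colour. -/

open Finset

variable {α β : Type*} {n : ℕ}

theorem le_card_ne_of_le_card_true_of_le_card_false {B : Fin n → Bool} {m : ℕ}
    (htrue : m ≤ #{l | B l = true}) (hfalse : m ≤ #{l | B l = false}) (b : Bool) :
    m ≤ #{l | B l ≠ b} := by
  cases b <;> simpa

theorem exists_adjacent_ne_of_le_card [DecidableEq β] (B : Fin n → β) (hn : 0 < n) {m : ℕ}
    (hm : 0 < m) (h : m ≤ #{l | B l ≠ B ⟨0, hn⟩}) :
    ∃ i j : Fin n, j.val = i.val + 1 ∧ j.val + m ≤ n ∧ B i ≠ B j := by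
  set S : Finset (Fin n) := {l | B l ≠ B ⟨0, hn⟩}
  have hS : S.Nonempty := card_pos.mp (by omega)
  set j := S.min' hS
  have hjS : B j ≠ B ⟨0, hn⟩ := (mem_filter.mp (S.min'_mem hS)).2
  have hj0 : j.val ≠ 0 := fun h => hjS (congrArg B (Fin.ext h))
  let i : Fin n := ⟨j.val - 1, by omega⟩
  have hi : B i = B ⟨0, hn⟩ := by
    by_contra hiS
    have hji : j.val ≤ j.val - 1 := S.min'_le i (mem_filter.mpr ⟨mem_univ _, hiS⟩)
    omega
  have hSj : S ⊆ Ici j := fun l hl => mem_Ici.mpr (S.min'_le l hl)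
  have hjm : m ≤ n - j := (h.trans (card_le_card hSj)).trans_eq (Fin.card_Ici j)
  exact ⟨i, j, show j.val = j.val - 1 + 1 by omega, by omega, hi.trans_ne hjS.symm⟩

section Intervals

variable [LinearOrder α] {p : Fin n → α}

/-- The intervals `[p i, p (i + 1)]` for `i < r`. -/
def adjacentIntervals (p : Fin n → α) {r : ℕ} (hr : r < n) : Finset (α × α) :=
  univ.image fun i : Fin r => (p (Fin.castLE hr i.castSucc), p (Fin.castLE hr i.succ))

theorem card_adjacentIntervals (hp : StrictMono p) {r : ℕ} (hr : r < n) :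
    #(adjacentIntervals p hr) = r := by
  rw [adjacentIntervals, card_image_of_injective _ fun i i' h => ?_, card_univ, Fintype.card_fin]
  simpa [Fin.ext_iff] using hp.injective (congrArg Prod.fst h)

theorem mem_adjacentIntervals {r : ℕ} (hr : r < n) {i j : Fin n} (hij : j.val = i.val + 1)
    (hj : j.val ≤ r) : (p i, p j) ∈ adjacentIntervals p hr :=
  mem_image.mpr ⟨⟨i.val, by omega⟩, mem_univ _,
    Prod.ext (congrArg p (Fin.ext rfl)) (congrArg p (Fin.ext hij.symm))⟩

theorem StrictMono.le_and_le_iff_of_val_eq_succ (hp : StrictMono p) {i j : Fin n}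
    (hij : j.val = i.val + 1) (l : Fin n) :
    p i ≤ p l ∧ p l ≤ p j ↔ l = i ∨ l = j := by
  simp only [hp.le_iff_le, Fin.le_def, Fin.ext_iff]
  omega

def colorCount [DecidableEq β] (p : Fin n → α) (B : Fin n → β) (I : α × α) (c : β) : ℕ :=
  #{l | I.1 ≤ p l ∧ p l ≤ I.2 ∧ B l = c}

theorem colorCount_eq_one (hp : StrictMono p) {B : Fin n → Bool} {i j : Fin n}
    (hij : j.val = i.val + 1) (hB : B i ≠ B j) (c : Bool) :
    colorCount p B (p i, p j) c = 1 := by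
  refine card_eq_one.mpr ⟨if B i = c then i else j, ?_⟩
  ext l
  simp only [mem_filter, mem_univ, true_and, mem_singleton, ← and_assoc,
    hp.le_and_le_iff_of_val_eq_succ hij]
  constructor
  · rintro ⟨rfl | rfl, rfl⟩
    · simp
    · simp [hB]
  · split_ifs with h
    · rintro rfl
      exact ⟨.inl rfl, h⟩
    · rintro rfl
      exact ⟨.inr rfl, by cases c <;> simp_all⟩

end Intervals

/-- Let `m < n/2`.  For points `p 0 < … < p (n-1)` on a line there is a family
of `n - m` intervals (encoded as pairs of endpoints) such that for every
`m`-restricted bicoloring (at least `m` red and at least `m` blue points),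
some interval of the family is balanced, i.e. contains equally many (and at
least one of each) red and blue points. -/
theorem stmt_7 (n m : ℕ) (hm : 1 ≤ m) (hmn : 2 * m < n)
    (p : Fin n → ℝ) (hp : StrictMono p) :
    ∃ F : Finset (ℝ × ℝ), F.card = n - m ∧
      ∀ B : Fin n → Bool,
        m ≤ (Finset.univ.filter (fun l : Fin n => B l = true)).card →
        m ≤ (Finset.univ.filter (fun l : Fin n => B l = false)).card →
        ∃ I ∈ F,
          (Finset.univ.filter
            (fun l : Fin n => I.1 ≤ p l ∧ p l ≤ I.2 ∧ B l = true)).card =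
          (Finset.univ.filter
            (fun l : Fin n => I.1 ≤ p l ∧ p l ≤ I.2 ∧ B l = false)).card ∧
          0 < (Finset.univ.filter
            (fun l : Fin n => I.1 ≤ p l ∧ p l ≤ I.2 ∧ B l = true)).card := by
  have hr : n - m < n := by omega
  refine ⟨adjacentIntervals p hr, card_adjacentIntervals hp hr, fun B htrue hfalse => ?_⟩
  obtain ⟨i, j, hij, hjm, hB⟩ := exists_adjacent_ne_of_le_card B (by omega) hm
    (le_card_ne_of_le_card_true_of_le_card_false htrue hfalse _)
  refine ⟨(p i, p j), mem_adjacentIntervals hr hij (by omega), ?_⟩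
  change colorCount p B _ true = colorCount p B _ false ∧ 0 < colorCount p B _ true
  simp only [colorCount_eq_one hp hij hB, zero_lt_one, and_self]
end

section
/- The Gabriel graph of any finite set of points P in ℝ^d is connected, where P has at least one point and distinct points. -/
lemma gabriel_aux {E : Type*} [NormedAddCommGroup E] [InnerProductSpace ℝ E]
    (x y z : E) (hzx : z ≠ x) (hzy : z ≠ y)
    (h : dist z (midpoint ℝ x y) ≤ dist x y / 2) :
    dist x z < dist x y ∧ dist z y < dist x y := by
  set a := z - midpoint ℝ x y with ha
  set b := (2⁻¹ : ℝ) • (y - x) with hb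
  have hm : midpoint ℝ x y = (2⁻¹ : ℝ) • (x + y) := by
    rw [midpoint_eq_smul_add, invOf_eq_inv]
  have hzx' : z - x = a + b := by rw [ha, hb, hm]; module
  have hzy' : z - y = a - b := by rw [ha, hb, hm]; module
  have hpar := parallelogram_law_with_norm ℝ a b
  have hna : ‖a‖ = dist z (midpoint ℝ x y) := (dist_eq_norm _ _).symm
  have hnb : ‖b‖ = dist x y / 2 := by
    rw [hb, norm_smul, dist_eq_norm, ← norm_sub_rev]
    simp [abs_of_pos]
    ring
  have h1 : dist x z = ‖a + b‖ := by rw [← hzx', dist_eq_norm, norm_sub_rev]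
  have h2 : dist z y = ‖a - b‖ := by rw [← hzy', dist_eq_norm]
  have hpos1 : 0 < dist x z := dist_pos.2 (fun he => hzx he.symm)
  have hpos2 : 0 < dist z y := dist_pos.2 hzy
  have hd : 0 ≤ dist x y := dist_nonneg
  have hna' : 0 ≤ ‖a‖ := norm_nonneg _
  constructor <;> nlinarith [hpar, h1, h2, hna, hnb, hpos1, hpos2]

/-- The Gabriel graph of a nonempty finite set of points in `ℝ^d` is connected.
Its vertices are the points of `P`, with an edge between distinct `x` and `y`
when the closed ball with diameter segment `xy` contains no point of `P`
other than `x` and `y`. -/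
theorem stmt_10 (d : ℕ) (P : Finset (EuclideanSpace ℝ (Fin d)))
    (hP : P.Nonempty) :
    (SimpleGraph.fromRel (fun x y : P =>
      ∀ z ∈ P, z ≠ (x : EuclideanSpace ℝ (Fin d)) →
        z ≠ (y : EuclideanSpace ℝ (Fin d)) →
        dist (x : EuclideanSpace ℝ (Fin d)) (y : EuclideanSpace ℝ (Fin d)) / 2
          < dist z (midpoint ℝ (x : EuclideanSpace ℝ (Fin d))
              (y : EuclideanSpace ℝ (Fin d))))).Connected := by
  classical
  set rel := (fun x y : P =>
      ∀ z ∈ P, z ≠ (x : EuclideanSpace ℝ (Fin d)) →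
        z ≠ (y : EuclideanSpace ℝ (Fin d)) →
        dist (x : EuclideanSpace ℝ (Fin d)) (y : EuclideanSpace ℝ (Fin d)) / 2
          < dist z (midpoint ℝ (x : EuclideanSpace ℝ (Fin d))
              (y : EuclideanSpace ℝ (Fin d)))) with hrel
  set G := SimpleGraph.fromRel rel with hG
  haveI hne : Nonempty P := ⟨⟨hP.choose, hP.choose_spec⟩⟩
  rw [SimpleGraph.connected_iff]
  refine ⟨?_, hne⟩
  -- measure: number of strictly closer pairs
  set μ : P → P → ℕ := fun x y =>
    ((P ×ˢ P).filter fun p =>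
      dist p.1 p.2 < dist (x : EuclideanSpace ℝ (Fin d)) y).card with hμ
  have hmono : ∀ x y u v : P,
      dist (u : EuclideanSpace ℝ (Fin d)) v < dist (x : EuclideanSpace ℝ (Fin d)) y →
      μ u v < μ x y := by
    intro x y u v hlt
    apply Finset.card_lt_card
    constructor
    · intro p hp
      simp only [Finset.mem_filter] at hp ⊢
      exact ⟨hp.1, hp.2.trans hlt⟩
    · intro hsub
      have : ((u : EuclideanSpace ℝ (Fin d)), (v : EuclideanSpace ℝ (Fin d))) ∈
          (P ×ˢ P).filter (fun p =>
            dist p.1 p.2 < dist (x : EuclideanSpace ℝ (Fin d)) y) := by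
        simp [Finset.mem_filter, Finset.mem_product, u.2, v.2, hlt]
      have := hsub this
      simp [Finset.mem_filter] at this
  suffices H : ∀ n : ℕ, ∀ x y : P, μ x y ≤ n → G.Reachable x y by
    intro x y; exact H (μ x y) x y le_rfl
  intro n
  induction n with
  | zero =>
    intro x y hxy
    by_cases hxyeq : x = y
    · subst hxyeq; rfl
    by_cases hr : rel x y
    · exact SimpleGraph.Adj.reachable (by
        rw [hG, SimpleGraph.fromRel_adj]; exact ⟨hxyeq, Or.inl hr⟩)
    · exfalso
      simp only [hrel] at hr
      push_neg at hr
      obtain ⟨z, hzP, hzx, hzy, hz⟩ := hr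
      have := gabriel_aux (x : EuclideanSpace ℝ (Fin d)) y z hzx hzy hz
      have hlt := hmono x y x ⟨z, hzP⟩ this.1
      omega
  | succ n ih =>
    intro x y hxy
    by_cases hxyeq : x = y
    · subst hxyeq; rfl
    by_cases hr : rel x y
    · exact SimpleGraph.Adj.reachable (by
        rw [hG, SimpleGraph.fromRel_adj]; exact ⟨hxyeq, Or.inl hr⟩)
    · simp only [hrel] at hr
      push_neg at hr
      obtain ⟨z, hzP, hzx, hzy, hz⟩ := hr
      have hkey := gabriel_aux (x : EuclideanSpace ℝ (Fin d)) y z hzx hzy hz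
      have h1 := hmono x y x ⟨z, hzP⟩ hkey.1
      have h2 := hmono x y ⟨z, hzP⟩ y hkey.2
      exact (ih x ⟨z, hzP⟩ (by omega)).trans (ih ⟨z, hzP⟩ y (by omega))
end

section
/- Let P be a finite set of points in ℝ^d and let Q ∪ R be a partition of P into two nonempty parts. If q ∈ Q and r ∈ R minimize the distance d(q, r) over all pairs in Q × R, then the closed ball with diameter segment qr contains no point of P other than q and r; thus qr is an edge of the Gabriel graph of P. -/
/-- Let `P = Q ∪ R` be a partition of a finite point set in `ℝ^d` into two
nonempty parts, and let `q ∈ Q`, `r ∈ R` minimize the distance over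
`Q × R`.  Then the closed ball with diameter segment `qr` contains no point
of `P` other than `q` and `r`; hence `qr` is an edge of the Gabriel graph. -/
theorem stmt_11 (d : ℕ) (P Q R : Finset (EuclideanSpace ℝ (Fin d)))
    (hQR : ∀ x, x ∈ P ↔ x ∈ Q ∨ x ∈ R) (hdisj : Disjoint Q R)
    (hQ : Q.Nonempty) (hR : R.Nonempty)
    (q r : EuclideanSpace ℝ (Fin d)) (hq : q ∈ Q) (hr : r ∈ R)
    (hmin : ∀ q' ∈ Q, ∀ r' ∈ R, dist q r ≤ dist q' r') :
    ∀ z ∈ P, z ≠ q → z ≠ r → dist q r / 2 < dist z (midpoint ℝ q r) := by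
  intro z hz hzq hzr
  by_contra hcon
  push_neg at hcon
  -- parallelogram identity
  have hpar := parallelogram_law_with_norm ℝ (z - q) (z - r)
  have h1 : z - q + (z - r) = (2 : ℝ) • (z - midpoint ℝ q r) := by
    have hm : midpoint ℝ q r + midpoint ℝ q r = q + r := midpoint_add_self ℝ q r
    rw [two_smul, eq_comm, ← sub_eq_zero,
      show z - midpoint ℝ q r + (z - midpoint ℝ q r) - (z - q + (z - r)) =
        q + r - (midpoint ℝ q r + midpoint ℝ q r) by abel, hm, sub_self]
  have h2 : z - q - (z - r) = r - q := by abel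
  rw [h1, h2, norm_smul] at hpar
  have hdm : dist z (midpoint ℝ q r) = ‖z - midpoint ℝ q r‖ := dist_eq_norm _ _
  have hqr : dist q r = ‖r - q‖ := by rw [dist_eq_norm, ← norm_neg]; congr 1; abel
  have hzq' : dist z q = ‖z - q‖ := dist_eq_norm _ _
  have hzr' : dist z r = ‖z - r‖ := dist_eq_norm _ _
  simp only [Real.norm_ofNat] at hpar
  have hsum : dist z q * dist z q + dist z r * dist z r ≤ dist q r * dist q r := by
    rw [hdm, hqr] at hcon
    rw [hzq', hzr', hqr]
    nlinarith [norm_nonneg (z - midpoint ℝ q r), norm_nonneg (r - q), hcon]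
  have hzq0 : 0 < dist z q := dist_pos.2 hzq
  have hzr0 : 0 < dist z r := dist_pos.2 hzr
  have hltq : dist z r < dist q r := by nlinarith [dist_nonneg (x := z) (y := r), dist_nonneg (x := q) (y := r)]
  have hltr : dist z q < dist q r := by nlinarith [dist_nonneg (x := z) (y := q)]
  rcases (hQR z).1 hz with hzQ | hzR
  · exact absurd (hmin z hzQ r hr) (by linarith)
  · have := hmin q hq z hzR
    rw [dist_comm q z] at this
    linarith
end

section
/- For any finite set P of n ≥ 2 distinct points in ℝ^d, there exists a family of n - 1 closed Euclidean balls such that for every non-constant 2-coloring of P, at least one ball in the family contains exactly one red and one blue point of P (and no other points of P). -/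
open Finset

attribute [local instance] Classical.propDecidable

/-- If `c` lies in the closed ball with diameter `[a,b]` and differs from both
endpoints, then it is strictly closer to `a` and to `b` than `dist a b`. -/
lemma ball_diam_lemma {d : ℕ} {a b c : EuclideanSpace ℝ (Fin d)}
    (hc : dist c (midpoint ℝ a b) ≤ dist a b / 2) (hca : c ≠ a) (hcb : c ≠ b) :
    dist a c < dist a b ∧ dist b c < dist a b := by
  set m := midpoint ℝ a b with hm
  have hpar := parallelogram_law_with_norm ℝ (c - m) (m - b)
  have h1 : c - m + (m - b) = c - b := by abel
  have hmm : m + m = a + b := by rw [hm]; exact midpoint_add_self ℝ a b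
  have h2 : c - m - (m - b) = c - a := by
    have h3 : m + (m - b) = m + m - b := by abel
    rw [sub_sub, h3, hmm, add_sub_cancel_right]
  rw [h1, h2] at hpar
  have hmb : ‖m - b‖ = dist a b / 2 := by
    rw [← dist_eq_norm, hm, dist_midpoint_right, Real.norm_ofNat]
    ring
  have hcm : ‖c - m‖ ≤ dist a b / 2 := by rwa [← dist_eq_norm]
  have hcmpos : (0:ℝ) ≤ ‖c - m‖ := norm_nonneg _
  have hcb' : dist c b > 0 := dist_pos.mpr hcb
  have hca' : dist c a > 0 := dist_pos.mpr hca
  have e1 : ‖c - b‖ = dist c b := (dist_eq_norm c b).symm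
  have e2 : ‖c - a‖ = dist c a := (dist_eq_norm c a).symm
  rw [e1, e2, hmb] at hpar
  have hd : (0:ℝ) ≤ dist a b := dist_nonneg
  constructor
  · rw [dist_comm a c]
    nlinarith [hpar, hcm, hcb', hca', hd, hcmpos]
  · rw [dist_comm b c]
    nlinarith [hpar, hcm, hcb', hca', hd, hcmpos]

lemma prim_lemma {d : ℕ} (P : Finset (EuclideanSpace ℝ (Fin d))) :
    ∀ k (S : Finset (EuclideanSpace ℝ (Fin d))), S ⊆ P → S.Nonempty →
      (P \ S).card = k →
    ∃ F : Fin k → EuclideanSpace ℝ (Fin d) × ℝ,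
      ∀ B : EuclideanSpace ℝ (Fin d) → Bool,
        (∃ x ∈ P, B x = true) → (∃ x ∈ P, B x = false) →
        (∀ x ∈ S, ∀ y ∈ S, B x = B y) →
        ∃ i : Fin k,
          (P.filter (fun x => B x = true ∧ dist x (F i).1 ≤ (F i).2)).card = 1 ∧
          (P.filter (fun x => B x = false ∧ dist x (F i).1 ≤ (F i).2)).card = 1 := by
  intro k
  induction k with
  | zero =>
    intro S hSP _ hcard
    refine ⟨fun i => i.elim0, ?_⟩
    rintro B ⟨x, hx, hxt⟩ ⟨y, hy, hyf⟩ hconst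
    have hSeq : S = P := eq_of_subset_of_card_le hSP (by
      have := card_sdiff_add_card_eq_card hSP
      omega)
    have := hconst x (hSeq ▸ hx) y (hSeq ▸ hy)
    rw [hxt, hyf] at this; exact absurd this (by simp)
  | succ k ih =>
    intro S hSP hSne hcard
    have hne : (P \ S).Nonempty := by
      rw [← card_pos, hcard]; omega
    -- pick the closest crossing pair (a, b), a ∈ S, b ∈ P \ S
    obtain ⟨p, hp, hpmin⟩ := exists_min_image (S ×ˢ (P \ S))
      (fun q => dist q.1 q.2) (hSne.product hne)
    obtain ⟨a, b⟩ := p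
    rw [mem_product] at hp
    obtain ⟨haS, hbPS⟩ := hp
    have hbP : b ∈ P := (mem_sdiff.mp hbPS).1
    have hbS : b ∉ S := (mem_sdiff.mp hbPS).2
    have haP : a ∈ P := hSP haS
    have hab : a ≠ b := fun h => hbS (h ▸ haS)
    set m := midpoint ℝ a b with hm
    set r := dist a b / 2 with hr
    -- the ball with diameter [a,b] contains exactly a and b from P
    have hball : ∀ c ∈ P, dist c m ≤ r → c = a ∨ c = b := by
      intro c hcP hcm
      by_contra hcon
      push_neg at hcon
      obtain ⟨hca, hcb⟩ := hcon
      obtain ⟨h1, h2⟩ := ball_diam_lemma hcm hca hcb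
      by_cases hcS : c ∈ S
      · have := hpmin (c, b) (mem_product.mpr ⟨hcS, hbPS⟩)
        simp only at this
        rw [dist_comm b c] at h2
        linarith
      · have hcPS : c ∈ P \ S := mem_sdiff.mpr ⟨hcP, hcS⟩
        have := hpmin (a, c) (mem_product.mpr ⟨haS, hcPS⟩)
        simp only at this
        linarith
    have ham : dist a m ≤ r := by
      rw [hm, hr, dist_left_midpoint, Real.norm_ofNat]
      linarith [dist_nonneg (x := a) (y := b)]
    have hbm : dist b m ≤ r := by
      rw [hm, hr, dist_comm, dist_midpoint_right, Real.norm_ofNat]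
      linarith [dist_nonneg (x := a) (y := b)]
    -- recursive call with S ∪ {b}
    have hS'P : insert b S ⊆ P := insert_subset hbP hSP
    have hS'card : (P \ insert b S).card = k := by
      rw [sdiff_insert]
      rw [card_erase_of_mem hbPS, hcard]
      omega
    obtain ⟨F', hF'⟩ := ih (insert b S) hS'P (insert_nonempty b S) hS'card
    refine ⟨Fin.cons (m, r) F', ?_⟩
    rintro B hT hFa hconst
    by_cases hbc : B b = B a
    · have hall : ∀ x ∈ insert b S, B x = B a := by
        intro x hx
        rcases mem_insert.mp hx with h | h
        · rw [h]; exact hbc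
        · exact hconst x h a haS
      have hconst' : ∀ x ∈ insert b S, ∀ y ∈ insert b S, B x = B y := by
        intro x hx y hy
        rw [hall x hx, hall y hy]
      obtain ⟨i, hi1, hi2⟩ := hF' B hT hFa hconst'
      exact ⟨i.succ, by rwa [Fin.cons_succ], by rwa [Fin.cons_succ]⟩
    · -- the first ball works: it contains exactly a (of one color) and b (of the other)
      have key : ∀ v : Bool,
          (P.filter (fun x => B x = v ∧ dist x m ≤ r)).card = 1 := by
        intro v
        have hset : P.filter (fun x => B x = v ∧ dist x m ≤ r)
            = {if B a = v then a else b} := by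
          ext c
          simp only [mem_filter, mem_singleton]
          constructor
          · rintro ⟨hcP, hcv, hcm⟩
            rcases hball c hcP hcm with rfl | rfl
            · simp [hcv]
            · have hne' : B a ≠ v := fun h => hbc (hcv.trans h.symm)
              simp [hne']
          · intro h
            by_cases hv : B a = v
            · simp only [hv, if_true] at h
              subst h; exact ⟨haP, hv, ham⟩
            · simp only [hv, if_false] at h
              subst h
              refine ⟨hbP, ?_, hbm⟩
              revert hv hbc
              cases B a <;> cases B c <;> cases v <;> simp
        rw [hset]; exact card_singleton _
      exact ⟨0, by rw [Fin.cons_zero]; exact key true, by rw [Fin.cons_zero]; exact key false⟩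

/-- For any finite set `P` of `n ≥ 2` points in `ℝ^d`, there is a family of
`n - 1` closed Euclidean balls (given by center–radius pairs) such that for
every non-constant 2-coloring of `P`, some ball of the family contains
exactly one red point of `P` and exactly one blue point of `P` (and hence no
other points of `P`). -/
theorem stmt_13 (d n : ℕ) (hn : 2 ≤ n)
    (P : Finset (EuclideanSpace ℝ (Fin d))) (hcard : P.card = n) :
    ∃ F : Fin (n - 1) → EuclideanSpace ℝ (Fin d) × ℝ,
      ∀ B : EuclideanSpace ℝ (Fin d) → Bool,
        (∃ x ∈ P, B x = true) → (∃ x ∈ P, B x = false) →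
        ∃ i : Fin (n - 1),
          (P.filter (fun x => B x = true ∧ dist x (F i).1 ≤ (F i).2)).card = 1 ∧
          (P.filter (fun x => B x = false ∧ dist x (F i).1 ≤ (F i).2)).card = 1 := by
  have hP : P.Nonempty := by rw [← card_pos, hcard]; omega
  obtain ⟨v0, hv0⟩ := hP
  have hsub : ({v0} : Finset (EuclideanSpace ℝ (Fin d))) ⊆ P := singleton_subset_iff.mpr hv0
  have hc : (P \ {v0}).card = n - 1 := by
    rw [card_sdiff_of_subset hsub, card_singleton, hcard]
  obtain ⟨F, hF⟩ := prim_lemma P (n - 1) {v0} hsub (singleton_nonempty v0) hc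
  exact ⟨F, fun B h1 h2 => hF B h1 h2 (by simp)⟩
end

section
/- Let a sequence of m+n points on a line be colored with m red and n blue points such that there are at least three blue points before the first red point, after the last red point, and between any two consecutive red points. Then every interval containing equally many red and blue points contains exactly one point of each color; in particular the largest balanced interval contains exactly 2 points. -/
/-- Let `m+n` sorted points on a line be colored with `m` red (true) and `n`
blue (false) points so that there are at least three blue points before the
first red point, after the last red point, and between any two consecutive
red points.  Then every balanced interval (equally many red and blue points,
at least one of each) contains exactly one point of each color; in
particular it contains exactly 2 points. -/
theorem stmt_17 (m n : ℕ) (hm : 1 ≤ m) (p : Fin (m + n) → ℝ)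
    (hp : StrictMono p) (c : Fin (m + n) → Bool)
    (hcard : (Finset.univ.filter (fun i : Fin (m + n) => c i = true)).card = m)
    (hsep1 : ∀ i : Fin (m + n), c i = true →
      3 ≤ (i : ℕ) ∧ (i : ℕ) + 4 ≤ m + n)
    (hsep2 : ∀ i j : Fin (m + n), c i = true → c j = true →
      (i : ℕ) < (j : ℕ) → (i : ℕ) + 4 ≤ (j : ℕ)) :
    ∀ a b : ℝ,
      (Finset.univ.filter
        (fun i : Fin (m + n) => a ≤ p i ∧ p i ≤ b ∧ c i = true)).card =
      (Finset.univ.filter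
        (fun i : Fin (m + n) => a ≤ p i ∧ p i ≤ b ∧ c i = false)).card →
      0 < (Finset.univ.filter
        (fun i : Fin (m + n) => a ≤ p i ∧ p i ≤ b ∧ c i = true)).card →
      (Finset.univ.filter
        (fun i : Fin (m + n) => a ≤ p i ∧ p i ≤ b ∧ c i = true)).card = 1 ∧
      (Finset.univ.filter
        (fun i : Fin (m + n) => a ≤ p i ∧ p i ≤ b ∧ c i = false)).card = 1 := by
  intro a b heq hpos
  set RS := Finset.univ.filter
      (fun i : Fin (m + n) => a ≤ p i ∧ p i ≤ b ∧ c i = true) with hRSdef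
  set BS := Finset.univ.filter
      (fun i : Fin (m + n) => a ≤ p i ∧ p i ≤ b ∧ c i = false) with hBSdef
  suffices h : RS.card = 1 by exact ⟨h, by omega⟩
  by_contra hne
  have hR2 : 2 ≤ RS.card := by omega
  have hRSne : RS.Nonempty := Finset.card_pos.mp hpos
  set rmax := RS.max' hRSne with hrmaxdef
  have hrmaxmem : rmax ∈ RS := RS.max'_mem hRSne
  have hpmn : 0 < m + n := rmax.pos
  have hmemRS : ∀ i : Fin (m + n), i ∈ RS ↔ a ≤ p i ∧ p i ≤ b ∧ c i = true := by
    intro i; simp [hRSdef]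
  have hmemBS : ∀ i : Fin (m + n), i ∈ BS ↔ a ≤ p i ∧ p i ≤ b ∧ c i = false := by
    intro i; simp [hBSdef]
  obtain ⟨hamax, hmaxb, hcmax⟩ := (hmemRS rmax).mp hrmaxmem
  -- injection from (RS.erase rmax) ×ˢ range 3 into BS
  set f : Fin (m + n) × ℕ → Fin (m + n) :=
    fun q => ⟨((q.1 : ℕ) + q.2 + 1) % (m + n), Nat.mod_lt _ hpmn⟩ with hfdef
  have key : ∀ q ∈ (RS.erase rmax) ×ˢ (Finset.range 3),
      ((q.1 : ℕ) + q.2 + 1 < (rmax : ℕ)) ∧ f q ∈ BS := by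
    rintro ⟨r, t⟩ hq
    simp only [Finset.mem_product, Finset.mem_erase, Finset.mem_range] at hq
    obtain ⟨⟨hrne, hrmem⟩, ht⟩ := hq
    obtain ⟨har, hrb, hcr⟩ := (hmemRS r).mp hrmem
    have hrle : r ≤ rmax := RS.le_max' r hrmem
    have hrlt : (r : ℕ) < (rmax : ℕ) := by
      rcases lt_or_eq_of_le hrle with h | h
      · exact h
      · exact absurd h hrne
    have h4 : (r : ℕ) + 4 ≤ (rmax : ℕ) := hsep2 r rmax hcr hcmax hrlt
    have hvlt : (r : ℕ) + t + 1 < (rmax : ℕ) := by omega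
    refine ⟨hvlt, ?_⟩
    have hvmn : (r : ℕ) + t + 1 < m + n := lt_trans hvlt rmax.isLt
    have hval : ((f ⟨r, t⟩ : Fin (m + n)) : ℕ) = (r : ℕ) + t + 1 := by
      simp [hfdef, Nat.mod_eq_of_lt hvmn]
    have hrltf : r < f ⟨r, t⟩ := by
      rw [Fin.lt_def, hval]; omega
    have hflt : f ⟨r, t⟩ < rmax := by
      rw [Fin.lt_def, hval]; omega
    refine (hmemBS _).mpr ⟨le_of_lt (lt_of_le_of_lt har (hp hrltf)),
      le_of_lt (lt_of_lt_of_le (hp hflt) hmaxb), ?_⟩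
    by_contra hc
    have hc' : c (f ⟨r, t⟩) = true := by
      cases hcf : c (f ⟨r, t⟩) with
      | false => exact absurd hcf hc
      | true => rfl
    have := hsep2 r (f ⟨r, t⟩) hcr hc' (by rw [hval]; omega)
    rw [hval] at this; omega
  have hinj : Set.InjOn f ((RS.erase rmax) ×ˢ (Finset.range 3) : Finset _) := by
    rintro ⟨r, t⟩ hq ⟨r', t'⟩ hq' hfeq
    have hq2 := hq; have hq'2 := hq'
    simp only [Finset.coe_product, Set.mem_prod, Finset.mem_coe,
      Finset.mem_erase, Finset.coe_range, Set.mem_Iio] at hq2 hq'2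
    obtain ⟨⟨hrne, hrmem⟩, ht⟩ := hq2
    obtain ⟨⟨hrne', hrmem'⟩, ht'⟩ := hq'2
    obtain ⟨_, _, hcr⟩ := (hmemRS r).mp hrmem
    obtain ⟨_, _, hcr'⟩ := (hmemRS r').mp hrmem'
    have hlt := (key ⟨r, t⟩ (by simp only [Finset.mem_product,
      Finset.mem_erase, Finset.mem_range]; exact ⟨⟨hrne, hrmem⟩, ht⟩)).1
    have hlt' := (key ⟨r', t'⟩ (by simp only [Finset.mem_product,
      Finset.mem_erase, Finset.mem_range]; exact ⟨⟨hrne', hrmem'⟩, ht'⟩)).1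
    have hvmn : (r : ℕ) + t + 1 < m + n := lt_trans hlt rmax.isLt
    have hvmn' : (r' : ℕ) + t' + 1 < m + n := lt_trans hlt' rmax.isLt
    have hveq : (r : ℕ) + t + 1 = (r' : ℕ) + t' + 1 := by
      have := congrArg (Fin.val) hfeq
      simpa [hfdef, Nat.mod_eq_of_lt hvmn, Nat.mod_eq_of_lt hvmn'] using this
    have hreq : (r : ℕ) = (r' : ℕ) := by
      rcases lt_trichotomy (r : ℕ) (r' : ℕ) with h | h | h
      · have := hsep2 r r' hcr hcr' h; omega
      · exact h
      · have := hsep2 r' r hcr' hcr h; omega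
    have : r = r' := Fin.ext hreq
    subst this
    have : t = t' := by omega
    subst this
    rfl
  have hle : ((RS.erase rmax) ×ˢ (Finset.range 3)).card ≤ BS.card :=
    Finset.card_le_card_of_injOn f (fun q hq => (key q hq).2) hinj
  rw [Finset.card_product, Finset.card_erase_of_mem hrmaxmem,
    Finset.card_range] at hle
  omega
end

section
/- Color a uniformly random m-subset of {1,...,m+n} red and the rest blue, with m = m(n) = o(√n). Then the probability that there exist at least three blue points between consecutive red points, before the first red point, and after the last red point, tends to 1 as n → ∞; consequently the size of the largest balanced interval equals 2 with high probability. -/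
/-! In a colouring with at least three blue points before, after and between consecutive red
points, an interval containing `r ≥ 1` red points contains at least `3 (r - 1)` blue ones, so a
balanced interval containing a red point has exactly one point of each colour. The map
`t_i ↦ t_i + 3 i` on increasingly enumerated sets injects the `m`-subsets of `{1, …, n - 2m - 3}`
into these separated colourings, and `C(n - 2m - 3, m) / C(m + n, m) ≥ ((n - 3m - 2) / (m + n))^m
≥ 1 - m (4m + 2) / (m + n)` by Bernoulli's inequality, which tends to `1` since `m² = o(n)`. -/

open Filter Finset

def redPoints (K : ℕ) (S : Finset ℕ) (a b : ℕ) : Finset ℕ :=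
  (Icc 1 K).filter fun p => a ≤ p ∧ p ≤ b ∧ p ∈ S

def bluePoints (K : ℕ) (S : Finset ℕ) (a b : ℕ) : Finset ℕ :=
  (Icc 1 K).filter fun p => a ≤ p ∧ p ≤ b ∧ p ∉ S

-- Every red point but the last is followed by `d` blue points, and these runs are disjoint.
theorem mul_card_redPoints_sub_one_le_card_bluePoints {d K : ℕ} {S : Finset ℕ}
    (hS : ∀ i ∈ S, ∀ j ∈ S, i < j → i + (d + 1) ≤ j) (a b : ℕ) :
    d * (#(redPoints K S a b) - 1) ≤ #(bluePoints K S a b) := by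
  set R := redPoints K S a b
  rcases R.eq_empty_or_nonempty with hR | hR
  · simp [hR]
  have hmem : ∀ {p}, p ∈ R ↔ (1 ≤ p ∧ p ≤ K) ∧ a ≤ p ∧ p ≤ b ∧ p ∈ S := by
    intro p; simp [R, redPoints]
  have htop := hmem.1 (R.max'_mem hR)
  have hbelow : ∀ i ∈ R.erase (R.max' hR), i ∈ S ∧ a ≤ i ∧ i + (d + 1) ≤ R.max' hR := by
    intro i hi
    have hiR := hmem.1 (mem_of_mem_erase hi)
    exact ⟨hiR.2.2.2, hiR.2.1,
      hS i hiR.2.2.2 _ htop.2.2.2 ((R.le_max' i (mem_of_mem_erase hi)).lt_of_ne (ne_of_mem_erase hi))⟩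
  calc d * (#R - 1) = #(R.erase (R.max' hR) ×ˢ Icc 1 d) := by
        rw [card_product, card_erase_of_mem (R.max'_mem hR), Nat.card_Icc, mul_comm]; rfl
    _ ≤ #(bluePoints K S a b) := by
      refine card_le_card_of_injOn (fun q => q.1 + q.2) ?_ ?_
      · rintro ⟨i, k⟩ hq
        simp only [coe_product, Set.mem_prod, mem_coe, mem_Icc] at hq
        obtain ⟨hiS, hai, hgap⟩ := hbelow i hq.1
        have hblue : i + k ∉ S := fun h => by have := hS i hiS _ h (by omega); omega
        simp only [bluePoints, coe_filter, mem_Icc]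
        exact ⟨⟨by omega, by omega⟩, by omega, by omega, hblue⟩
      · rintro ⟨i, k⟩ hq ⟨i', k'⟩ hq' hsum
        simp only [coe_product, Set.mem_prod, mem_coe, mem_Icc] at hq hq' hsum
        rcases lt_trichotomy i i' with h | rfl | h
        · have := hS i (hbelow i hq.1).1 i' (hbelow i' hq'.1).1 h; omega
        · simp only [Prod.mk.injEq, true_and]; omega
        · have := hS i' (hbelow i' hq'.1).1 i (hbelow i hq.1).1 h; omega

def separatedSets (d M K : ℕ) : Finset (Finset ℕ) :=
  (Icc 1 K).powerset.filter fun S => #S = M ∧ (∀ i ∈ S, d + 1 ≤ i ∧ i + d ≤ K) ∧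
    ∀ i ∈ S, ∀ j ∈ S, i < j → i + (d + 1) ≤ j

section Spread

variable (d : ℕ) (T : Finset ℕ)

def spread (x : ℕ) : ℕ := x + d * #{t ∈ T | t ≤ x}

def spreadSet : Finset ℕ := T.image (spread d T)

def unspreadSet (U : Finset ℕ) : Finset ℕ := U.image fun u => u - d * #{v ∈ U | v ≤ u}

variable {d T}

theorem spread_mono {x y : ℕ} (hxy : x ≤ y) : spread d T x ≤ spread d T y := by
  have : #{t ∈ T | t ≤ x} ≤ #{t ∈ T | t ≤ y} :=
    card_le_card fun t ht => by simp only [mem_filter] at ht ⊢; exact ⟨ht.1, by omega⟩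
  unfold spread
  gcongr

theorem spread_add_lt {x y : ℕ} (hy : y ∈ T) (hxy : x < y) :
    spread d T x + d < spread d T y := by
  have hlt : #{t ∈ T | t ≤ x} < #{t ∈ T | t ≤ y} := by
    refine card_lt_card ((ssubset_iff_of_subset fun t ht => ?_).2 ⟨y, ?_, fun h => ?_⟩)
    · simp only [mem_filter] at ht ⊢; exact ⟨ht.1, by omega⟩
    · simpa using hy
    · simp only [mem_filter] at h; omega
  have := Nat.mul_le_mul_left d hlt
  unfold spread
  rw [Nat.mul_succ] at this
  omega

theorem spread_lt_spread_iff {x y : ℕ} (hy : y ∈ T) :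
    spread d T x < spread d T y ↔ x < y :=
  ⟨fun h => lt_of_not_ge fun hyx => (spread_mono hyx).not_gt h,
    fun h => (Nat.le_add_right _ _).trans_lt (spread_add_lt hy h)⟩

theorem spread_strictMonoOn : StrictMonoOn (spread d T) T :=
  fun _ _ _ hy h => (spread_lt_spread_iff hy).2 h

theorem card_spreadSet : #(spreadSet d T) = #T := card_image_of_injOn spread_strictMonoOn.injOn

theorem card_filter_spreadSet_le (x : ℕ) :
    #{u ∈ spreadSet d T | u ≤ spread d T x} = #{t ∈ T | t ≤ x} := by
  have hfilter : {t ∈ T | spread d T t ≤ spread d T x} = {t ∈ T | t ≤ x} :=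
    filter_congr fun t ht => by simpa only [not_lt] using (spread_lt_spread_iff (x := x) ht).not
  rw [spreadSet, filter_image, hfilter,
    card_image_of_injOn (spread_strictMonoOn.injOn.mono (filter_subset _ T))]

theorem unspreadSet_spreadSet : unspreadSet d (spreadSet d T) = T := by
  rw [unspreadSet, spreadSet, image_image]
  conv_rhs => rw [← image_id (s := T)]
  refine image_congr fun x hx => ?_
  change spread d T x - d * #{u ∈ spreadSet d T | u ≤ spread d T x} = x
  rw [card_filter_spreadSet_le x, spread, Nat.add_sub_cancel]

end Spread

theorem spreadSet_injective (d : ℕ) : Function.Injective (spreadSet d) :=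
  Function.LeftInverse.injective fun _ => unspreadSet_spreadSet

theorem spreadSet_mem_separatedSets {d M K : ℕ} {T : Finset ℕ}
    (hT : T ∈ (Icc 1 (K - d * (M + 1))).powersetCard M) : spreadSet d T ∈ separatedSets d M K := by
  rw [mem_powersetCard] at hT
  have hbound : ∀ x ∈ T, d + 1 ≤ spread d T x ∧ spread d T x + d ≤ K := by
    intro x hx
    have hxK := mem_Icc.1 (hT.1 hx)
    have hpos : 1 ≤ #{t ∈ T | t ≤ x} := card_pos.2 ⟨x, mem_filter.2 ⟨hx, le_rfl⟩⟩
    have hleM : #{t ∈ T | t ≤ x} ≤ M := hT.2 ▸ card_filter_le T _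
    have := Nat.mul_le_mul_left d hpos
    have := Nat.mul_le_mul_left d hleM
    unfold spread
    rw [Nat.mul_succ] at hxK
    omega
  simp only [separatedSets, mem_filter, mem_powerset, spreadSet, forall_mem_image]
  refine ⟨fun u hu => ?_, card_spreadSet.trans hT.2, fun x hx => hbound x hx, fun x _ y hy hxy => ?_⟩
  · obtain ⟨x, hx, rfl⟩ := mem_image.1 hu
    have := hbound x hx
    exact mem_Icc.2 ⟨by omega, by omega⟩
  · exact spread_add_lt hy ((spread_lt_spread_iff hy).1 hxy)

theorem choose_le_card_separatedSets (d M K : ℕ) :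
    (K - d * (M + 1)).choose M ≤ #(separatedSets d M K) := by
  calc (K - d * (M + 1)).choose M = #((Icc 1 (K - d * (M + 1))).powersetCard M) := by simp
    _ ≤ #(separatedSets d M K) :=
      card_le_card_of_injOn (spreadSet d) (fun _ hT => spreadSet_mem_separatedSets hT)
        (spreadSet_injective d).injOn

theorem pow_le_choose_div_choose {a b M : ℕ} (hMa : M ≤ a) (hab : a ≤ b) :
    (((a : ℝ) + 1 - M) / b) ^ M ≤ a.choose M / b.choose M := by
  have hdesc : ∀ n : ℕ, (n.choose M : ℝ) = n.descFactorial M / M.factorial := fun n => by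
    rw [Nat.descFactorial_eq_factorial_mul_choose]; push_cast; field_simp
  have hnum : (((a + 1 - M : ℕ) : ℝ)) = (a : ℝ) + 1 - M := by
    rw [Nat.cast_sub (by omega)]; push_cast; ring
  rw [hdesc, hdesc, div_div_div_cancel_right₀ (by positivity), div_pow, ← hnum]
  exact div_le_div₀ (by positivity) (mod_cast Nat.pow_sub_le_descFactorial a M)
    (mod_cast Nat.descFactorial_pos.2 (hMa.trans hab)) (mod_cast Nat.descFactorial_le_pow b M)

theorem one_sub_mul_le_choose_div_choose {a b : ℕ} (M : ℕ) (hab : a ≤ b) :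
    1 - M * (1 - ((a : ℝ) + 1 - M) / b) ≤ a.choose M / b.choose M := by
  set x := ((a : ℝ) + 1 - M) / b
  rcases le_or_gt M a with hMa | haM
  · have hx : 0 ≤ x := by
      have : (M : ℝ) ≤ a := mod_cast hMa
      exact div_nonneg (by linarith) (Nat.cast_nonneg b)
    calc 1 - M * (1 - x) = 1 + M * (x - 1) := by ring
      _ ≤ (1 + (x - 1)) ^ M := one_add_mul_le_pow (by linarith) M
      _ = x ^ M := by ring
      _ ≤ _ := pow_le_choose_div_choose hMa hab
  · have hx : x ≤ 0 := by
      have : (a : ℝ) + 1 ≤ M := mod_cast haM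
      exact div_nonpos_of_nonpos_of_nonneg (by linarith) (Nat.cast_nonneg b)
    have hM : (1 : ℝ) ≤ M := mod_cast Nat.one_le_of_lt haM
    rw [Nat.choose_eq_zero_of_lt haM, Nat.cast_zero, zero_div]
    nlinarith

theorem one_sub_sq_div_le_choose_div_choose (c M : ℕ) {N : ℕ} (hN : 0 < N) :
    1 - (2 * c + 1) * ((M : ℝ) ^ 2 / N) ≤
      ((M + N - c * (M + 1)).choose M : ℝ) / (M + N).choose M := by
  refine le_trans ?_ (one_sub_mul_le_choose_div_choose M (Nat.sub_le _ _))
  set A := M + N - c * (M + 1)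
  have hA : (M : ℝ) + N ≤ A + c * (M + 1) := by
    exact_mod_cast (by omega : M + N ≤ A + c * (M + 1))
  rcases Nat.eq_zero_or_pos M with rfl | hM
  · simp
  have hN' : (0 : ℝ) < N := mod_cast hN
  have hM' : (1 : ℝ) ≤ M := mod_cast hM
  push_cast
  rw [sub_le_sub_iff_left, one_sub_div (by positivity), ← mul_div_assoc, mul_div_assoc',
    div_le_div_iff₀ (by positivity) hN']
  nlinarith [mul_le_mul_of_nonneg_left hA (by positivity : (0 : ℝ) ≤ M * N),
    mul_le_mul_of_nonneg_left hM' (by positivity : (0 : ℝ) ≤ c * M * N),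
    (by positivity : (0 : ℝ) ≤ (2 * c + 1) * M ^ 2 * M)]

theorem card_redPoints_eq_one_of_separated {d K : ℕ} (hd : 3 ≤ d) {S : Finset ℕ}
    (hS : ∀ i ∈ S, ∀ j ∈ S, i < j → i + (d + 1) ≤ j) {a b : ℕ}
    (hbal : #(redPoints K S a b) = #(bluePoints K S a b)) (hpos : 0 < #(redPoints K S a b)) :
    #(redPoints K S a b) = 1 ∧ #(bluePoints K S a b) = 1 := by
  have h := mul_card_redPoints_sub_one_le_card_bluePoints (K := K) hS a b
  have : 3 * (#(redPoints K S a b) - 1) ≤ d * (#(redPoints K S a b) - 1) :=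
    Nat.mul_le_mul_right _ hd
  omega

theorem card_filter_powerset_le_choose {α : Type*} {s : Finset α} {p : Finset α → Prop}
    [DecidablePred p] {M : ℕ} (hp : ∀ t, p t → #t = M) :
    #(s.powerset.filter p) ≤ (#s).choose M := by
  rw [← card_powersetCard]
  exact card_le_card fun t ht => by
    rw [mem_filter, mem_powerset] at ht
    exact mem_powersetCard.2 ⟨ht.1, hp t ht.2⟩

open Classical in
theorem stmt_18 (m : ℕ → ℕ)
    (hm : Tendsto (fun n : ℕ => (m n : ℝ) / Real.sqrt n) atTop (nhds 0)) :
    Tendsto (fun n : ℕ =>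
      (((Finset.Icc 1 (m n + n)).powerset.filter (fun S : Finset ℕ =>
          S.card = m n ∧
          (∀ i ∈ S, 4 ≤ i ∧ i + 3 ≤ m n + n) ∧
          (∀ i ∈ S, ∀ j ∈ S, i < j → i + 4 ≤ j))).card : ℝ) /
        (Nat.choose (m n + n) (m n) : ℝ)) atTop (nhds 1) ∧
    Tendsto (fun n : ℕ =>
      (((Finset.Icc 1 (m n + n)).powerset.filter (fun S : Finset ℕ =>
          S.card = m n ∧
          ∀ a ∈ Finset.Icc 1 (m n + n), ∀ b ∈ Finset.Icc 1 (m n + n),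
            ((Finset.Icc 1 (m n + n)).filter
              (fun p => a ≤ p ∧ p ≤ b ∧ p ∈ S)).card =
            ((Finset.Icc 1 (m n + n)).filter
              (fun p => a ≤ p ∧ p ≤ b ∧ p ∉ S)).card →
            0 < ((Finset.Icc 1 (m n + n)).filter
              (fun p => a ≤ p ∧ p ≤ b ∧ p ∈ S)).card →
            ((Finset.Icc 1 (m n + n)).filter
              (fun p => a ≤ p ∧ p ≤ b ∧ p ∈ S)).card = 1 ∧
            ((Finset.Icc 1 (m n + n)).filter
              (fun p => a ≤ p ∧ p ≤ b ∧ p ∉ S)).card = 1)).card : ℝ) /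
        (Nat.choose (m n + n) (m n) : ℝ)) atTop (nhds 1) := by
  have hlow : Tendsto (fun n : ℕ => 1 - (2 * (3 : ℕ) + 1) * ((m n : ℝ) ^ 2 / n)) atTop (nhds 1) := by
    have := ((hm.pow 2).const_mul (2 * (3 : ℕ) + 1 : ℝ)).const_sub 1
    simpa [div_pow, Real.sq_sqrt (Nat.cast_nonneg _)] using this
  have hsep : ∀ᶠ n : ℕ in atTop, 1 - (2 * (3 : ℕ) + 1) * ((m n : ℝ) ^ 2 / n) ≤
      #(separatedSets 3 (m n) (m n + n)) / ((m n + n).choose (m n) : ℝ) :=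
    (eventually_gt_atTop 0).mono fun n hn =>
      (one_sub_sq_div_le_choose_div_choose 3 (m n) hn).trans <|
        div_le_div_of_nonneg_right (mod_cast choose_le_card_separatedSets 3 (m n) (m n + n))
          (Nat.cast_nonneg _)
  have hC : ∀ n, (0 : ℝ) ≤ (m n + n).choose (m n) := fun n => Nat.cast_nonneg _
  refine ⟨tendsto_of_tendsto_of_tendsto_of_le_of_le' hlow tendsto_const_nhds hsep
      (Eventually.of_forall fun n => div_le_one_of_le₀ ?_ (hC n)),
    tendsto_of_tendsto_of_tendsto_of_le_of_le' hlow tendsto_const_nhds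
      (hsep.mono fun n h => h.trans (div_le_div_of_nonneg_right ?_ (hC n)))
      (Eventually.of_forall fun n => div_le_one_of_le₀ ?_ (hC n))⟩
  · simpa using card_filter_powerset_le_choose (s := Icc 1 (m n + n)) fun S hS => hS.1
  · refine mod_cast card_le_card fun S hS => ?_
    simp only [separatedSets, mem_filter] at hS ⊢
    exact ⟨hS.1, hS.2.1, fun a _ b _ => card_redPoints_eq_one_of_separated le_rfl hS.2.2.2⟩
  · simpa using card_filter_powerset_le_choose (s := Icc 1 (m n + n)) fun S hS => hS.1
end
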